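/- Let ρ satisfy (A3), let 0 < b < 1, let ε ∈ (0, b), and let c > 0. If c > c(ε) := ε⁻¹ log(σ_{b,ε}/γ_{b,ε}), then B_CM(ε) > B_S(ε). -/

import Mathlib

open MeasureTheory ProbabilityTheory Filter Set

/-!
Since `ρ` is even and nondecreasing in `|u|`, the scale mixture `g s = ∫ ρ (z / s) dΦ` is
nonincreasing in `s`; as `g γ = b / (1 - ε) > (b - ε) / (1 - ε) = g σ`, this gives `γ ≤ σ`.
Then `D ≥ 0`, because the infimum over `[σ, ∞)` is taken over a smaller set than that over
`[γ, ∞)`, and the hypothesis on `c` says `log (σ / γ) < c ε`. Hence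
`(σ / γ)² < exp (2 c ε) ≤ exp (2 c ε + 2 D)`.
-/

lemma Function.Even.apply_abs {β : Type*} {ρ : ℝ → β} (hρ : ρ.Even) (x : ℝ) :
    ρ |x| = ρ x := by
  rcases abs_choice x with h | h <;> rw [h]
  exact hρ x

lemma Function.Even.le_of_abs_le {β : Type*} [Preorder β] {ρ : ℝ → β} (hρ : ρ.Even)
    (hmono : MonotoneOn ρ (Ici 0)) {x y : ℝ} (h : |x| ≤ |y|) : ρ x ≤ ρ y := by
  rw [← hρ.apply_abs x, ← hρ.apply_abs y]
  exact hmono (abs_nonneg x) (abs_nonneg y) h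

lemma antitoneOn_integral_comp_div {μ : Measure ℝ} [IsFiniteMeasure μ] {ρ : ℝ → ℝ} {C : ℝ}
    (hmeas : Measurable ρ) (hbdd : ∀ u, ‖ρ u‖ ≤ C) (heven : ρ.Even)
    (hmono : MonotoneOn ρ (Ici 0)) :
    AntitoneOn (fun s => ∫ z, ρ (z / s) ∂μ) (Ioi 0) := by
  have hint : ∀ s, Integrable (fun z => ρ (z / s)) μ := fun s =>
    .of_bound (hmeas.comp (measurable_id.div_const s)).aestronglyMeasurable C
      (ae_of_all _ fun z => hbdd _)
  intro s (hs : 0 < s) t _ hst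
  refine integral_mono (hint t) (hint s) fun z => heven.le_of_abs_le hmono ?_
  simp only [abs_div, abs_of_pos hs, abs_of_pos (lt_of_lt_of_le hs hst)]
  exact div_le_div_of_nonneg_left (abs_nonneg z) hs hst

lemma bddBelow_image_Ici_mul_add_log {h : ℝ → ℝ} {k a : ℝ} (ha : 0 < a) (hk : 0 ≤ k)
    (hh : ∀ s, a ≤ s → 0 ≤ h s) : BddBelow ((fun s => k * h s + Real.log s) '' Ici a) := by
  refine ⟨Real.log a, forall_mem_image.2 fun s hs => ?_⟩
  have hlog := Real.log_le_log ha hs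
  have hmul := mul_nonneg hk (hh s hs)
  linarith

lemma sqrt_sq_sub_one_lt_sqrt_exp_two_mul_sub_one {r x : ℝ} (hr : 1 ≤ r)
    (h : Real.log r < x) : √(r ^ 2 - 1) < √(Real.exp (2 * x) - 1) := by
  have hrx : r < Real.exp x := (Real.log_lt_iff_lt_exp (by linarith)).1 h
  have hsq : r ^ 2 < Real.exp (2 * x) := by
    rw [two_mul, Real.exp_add, ← sq]
    exact pow_lt_pow_left₀ hrx (by linarith) two_ne_zero
  exact Real.sqrt_lt_sqrt (by nlinarith) (by linarith)

theorem stmt10_general (ρ : ℝ → ℝ)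
    (hρ_meas : Measurable ρ)
    (hρ_even : ∀ u, ρ (-u) = ρ u)
    (hρ_mono : MonotoneOn ρ (Set.Ici 0))
    (hρ_bdd : ∀ u, 0 ≤ ρ u ∧ ρ u ≤ 1)
    (g : ℝ → ℝ)
    (hg : ∀ s, 0 < s → g s = ∫ z, ρ (z / s) ∂(gaussianReal 0 1))
    (b ε : ℝ) (hε : 0 < ε) (hεb : ε < b) (hb : b < 1)
    (σbε γbε : ℝ) (hσ_pos : 0 < σbε) (hγ_pos : 0 < γbε)
    (hσ : g σbε = (b - ε) / (1 - ε)) (hγ : g γbε = b / (1 - ε))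
    (c : ℝ) (hc0 : 0 < c)
    (hcε : c > ε⁻¹ * Real.log (σbε / γbε))
    (A : ℝ → ℝ) (hA : ∀ s, A s = c * (1 - ε) * g s + Real.log s)
    (D : ℝ) (hD : D = sInf (A '' Set.Ici σbε) - sInf (A '' Set.Ici γbε))
    (BS : ℝ) (hBS : BS = Real.sqrt ((σbε / γbε) ^ 2 - 1))
    (BCM : ℝ) (hBCM : BCM = Real.sqrt (Real.exp (2 * c * ε + 2 * D) - 1)) :
    BCM > BS := by
  obtain rfl : A = fun s => c * (1 - ε) * g s + Real.log s := funext hA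
  have hε1 : 0 < 1 - ε := by linarith
  have hγσ : γbε ≤ σbε := by
    by_contra! hσγ
    have hanti := antitoneOn_integral_comp_div (μ := gaussianReal 0 1) hρ_meas
      (fun u => abs_le.2 ⟨by linarith [hρ_bdd u], (hρ_bdd u).2⟩) hρ_even hρ_mono
      hσ_pos hγ_pos hσγ.le
    dsimp only at hanti
    rw [← hg _ hσ_pos, ← hg _ hγ_pos, hσ, hγ, div_le_div_iff_of_pos_right hε1] at hanti
    linarith
  have hD0 : 0 ≤ D := by
    rw [hD, sub_nonneg]
    refine csInf_le_csInf (bddBelow_image_Ici_mul_add_log hγ_pos (by positivity) fun s hs => ?_)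
      (nonempty_Ici.image _) (image_mono (Ici_subset_Ici.2 hγσ))
    rw [hg s (hγ_pos.trans_le hs)]
    exact integral_nonneg fun z => (hρ_bdd _).1
  have hlog : Real.log (σbε / γbε) < c * ε := by
    rw [gt_iff_lt, inv_mul_lt_iff₀ hε] at hcε
    linarith
  rw [hBS, hBCM, show 2 * c * ε + 2 * D = 2 * (c * ε + D) by ring]
  exact sqrt_sq_sub_one_lt_sqrt_exp_two_mul_sub_one ((one_le_div hγ_pos).2 hγσ) (by linarith)

/-- Theorem 6.1(ii): If c > c(ε) = ε⁻¹ log(σ_{b,ε}/γ_{b,ε}), then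
B_CM(ε) > B_S(ε). -/
theorem stmt10 (ρ : ℝ → ℝ)
    (hρ_meas : Measurable ρ)
    (hρ_even : ∀ u, ρ (-u) = ρ u)
    (hρ_mono : MonotoneOn ρ (Set.Ici 0))
    (hρ_zero : ρ 0 = 0)
    (hρ_bdd : ∀ u, 0 ≤ ρ u ∧ ρ u ≤ 1)
    (hρ_lim : Tendsto ρ atTop (nhds 1))
    (g : ℝ → ℝ)
    (hg : ∀ s, 0 < s → g s = ∫ z, ρ (z / s) ∂(gaussianReal 0 1))
    (b ε : ℝ) (hε : 0 < ε) (hεb : ε < b) (hb : b < 1)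
    (σbε γbε : ℝ) (hσ_pos : 0 < σbε) (hγ_pos : 0 < γbε)
    (hσ : g σbε = (b - ε) / (1 - ε)) (hγ : g γbε = b / (1 - ε))
    (c : ℝ) (hc0 : 0 < c)
    (hcε : c > ε⁻¹ * Real.log (σbε / γbε))
    (A : ℝ → ℝ) (hA : ∀ s, A s = c * (1 - ε) * g s + Real.log s)
    (D : ℝ) (hD : D = sInf (A '' Set.Ici σbε) - sInf (A '' Set.Ici γbε))
    (BS : ℝ) (hBS : BS = Real.sqrt ((σbε / γbε) ^ 2 - 1))
    (BCM : ℝ) (hBCM : BCM = Real.sqrt (Real.exp (2 * c * ε + 2 * D) - 1)) :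
    BCM > BS :=
  stmt10_general ρ hρ_meas hρ_even hρ_mono hρ_bdd g hg b ε hε hεb hb σbε γbε hσ_pos hγ_pos hσ hγ c
    hc0 hcε A hA D hD BS hBS BCM hBCM
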